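/- For all integers q and m with q ≥ m ≥ 3, the inequality [m−1 over 1]_q · [m over 1]_q^{m−1} + [m−1 over 1]_q² · [2m−3 over m−2]_q < [2m−1 over m]_q holds. -/

import Mathlib

/-!
Write `G = [2m-1 over m]_q`. Peeling factors off with the recurrence
`[n+1 over k+1]_q = [n over k]_q (q^(n+1) - 1) / (q^(k+1) - 1)`, each of which is at least `q^a`
when `n - k = a`, gives `G ≥ q^(2(m-1)) [2m-3 over m-2]_q` and `G ≥ q^((m-1)^2) [m over 1]_q`.
Together with `[n over 1]_q < q^n / (q-1)` this bounds the second summand by `G/4`, and the first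
one strictly by `3G/4`, because `4 q^(m-2) ≤ 3 (q-1)^(m-1)` for `3 ≤ m ≤ q` by Bernoulli's inequality.
-/

/-- The Gaussian binomial coefficient `[n over m]_q`, as a rational number. -/
def gaussBinom (q n m : ℕ) : ℚ :=
  ∏ i ∈ Finset.range m, ((q : ℚ) ^ (n - i) - 1) / ((q : ℚ) ^ (m - i) - 1)

section Inequalities

variable {K : Type*} [Field K] [LinearOrder K] [IsStrictOrderedRing K]

theorem le_mul_sub_one_div_sub_one {x y : K} (hx : 1 ≤ x) (hy : 1 < y) :
    x ≤ (x * y - 1) / (y - 1) := by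
  rw [le_div_iff₀ (sub_pos.2 hy)]
  linarith

theorem four_mul_pow_le_three_mul_sub_one_pow {Q : K} {k : ℕ} (hk : 1 ≤ k)
    (hQ : (k : K) + 2 ≤ Q) : 4 * Q ^ k ≤ 3 * (Q - 1) ^ (k + 1) := by
  obtain ⟨j, rfl⟩ : ∃ j, k = j + 1 := ⟨k - 1, by omega⟩
  push_cast at hQ
  have hQ0 : 0 ≤ Q := by linarith [(j.cast_nonneg : (0 : K) ≤ j)]
  have bernoulli := pow_add_mul_le_add_pow hQ0 (by linarith : 0 ≤ 2 * Q + -1) (j + 1)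
  rw [Nat.add_sub_cancel, ← sub_eq_add_neg] at bernoulli
  push_cast at bernoulli
  have hQj : 0 ≤ Q ^ j := pow_nonneg hQ0 j
  have two_mul_pow_le : 2 * Q ^ j ≤ (Q - 1) ^ (j + 1) := by
    nlinarith [pow_succ Q j]
  rw [pow_succ (Q - 1), pow_succ Q]
  nlinarith

end Inequalities

theorem gaussBinom_one (q n : ℕ) : gaussBinom q n 1 = ((q : ℚ) ^ n - 1) / ((q : ℚ) - 1) := by
  simp [gaussBinom]

theorem gaussBinom_succ_succ (q n k : ℕ) :
    gaussBinom q (n + 1) (k + 1) =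
      gaussBinom q n k * (((q : ℚ) ^ (n + 1) - 1) / ((q : ℚ) ^ (k + 1) - 1)) := by
  simp only [gaussBinom, Finset.prod_range_succ', Nat.add_sub_add_right, Nat.sub_zero]

theorem gaussBinom_nonneg {q : ℕ} (hq : 1 ≤ q) (n k : ℕ) : 0 ≤ gaussBinom q n k := by
  have one_le_pow (j : ℕ) : (1 : ℚ) ≤ (q : ℚ) ^ j := one_le_pow₀ (by exact_mod_cast hq)
  exact Finset.prod_nonneg fun i _ ↦
    div_nonneg (sub_nonneg.2 (one_le_pow _)) (sub_nonneg.2 (one_le_pow _))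

theorem gaussBinom_one_lt {q : ℕ} (hq : 1 < q) (n : ℕ) :
    gaussBinom q n 1 < (q : ℚ) ^ n / ((q : ℚ) - 1) := by
  rw [gaussBinom_one]
  gcongr
  · exact sub_pos.2 (by exact_mod_cast hq)
  · linarith

theorem pow_mul_gaussBinom_le_gaussBinom {q : ℕ} (hq : 1 < q) (a k j : ℕ) :
    (q : ℚ) ^ (a * j) * gaussBinom q (a + k) k ≤ gaussBinom q (a + k + j) (k + j) := by
  have hQ : (1 : ℚ) < q := by exact_mod_cast hq
  induction j with
  | zero => simp
  | succ j ih =>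
    have factor_ge :
        (q : ℚ) ^ a ≤ ((q : ℚ) ^ (a + k + j + 1) - 1) / ((q : ℚ) ^ (k + j + 1) - 1) := by
      rw [show a + k + j + 1 = a + (k + j + 1) by ring, pow_add]
      exact le_mul_sub_one_div_sub_one (one_le_pow₀ hQ.le) (one_lt_pow₀ hQ (by omega))
    calc (q : ℚ) ^ (a * (j + 1)) * gaussBinom q (a + k) k
        = (q : ℚ) ^ a * ((q : ℚ) ^ (a * j) * gaussBinom q (a + k) k) := by ring
      _ ≤ (q : ℚ) ^ a * gaussBinom q (a + k + j) (k + j) := by gcongr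
      _ ≤ gaussBinom q (a + k + j) (k + j) *
            (((q : ℚ) ^ (a + k + j + 1) - 1) / ((q : ℚ) ^ (k + j + 1) - 1)) := by
        rw [mul_comm]
        gcongr
        exact gaussBinom_nonneg hq.le _ _
      _ = gaussBinom q (a + k + (j + 1)) (k + (j + 1)) := (gaussBinom_succ_succ _ _ _).symm

theorem gaussBinom_one_sq_mul_le {q : ℕ} (hq : 3 ≤ q) (k : ℕ) :
    gaussBinom q (k + 1) 1 ^ 2 * gaussBinom q (2 * k + 1) k ≤
      gaussBinom q (2 * k + 3) (k + 2) / 4 := by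
  have hQ : (3 : ℚ) ≤ q := by exact_mod_cast hq
  have growth := pow_mul_gaussBinom_le_gaussBinom (by omega : 1 < q) (k + 1) k 2
  rw [show k + 1 + k = 2 * k + 1 by ring, show 2 * k + 1 + 2 = 2 * k + 3 by ring] at growth
  have hA : gaussBinom q (k + 1) 1 ≤ (q : ℚ) ^ (k + 1) / 2 :=
    (gaussBinom_one_lt (by omega) _).le.trans
      (div_le_div_of_nonneg_left (by positivity) two_pos (by linarith))
  calc _ ≤ ((q : ℚ) ^ (k + 1) / 2) ^ 2 * gaussBinom q (2 * k + 1) k := by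
        gcongr
        · exact gaussBinom_nonneg (by omega) _ _
        · exact gaussBinom_nonneg (by omega) _ _
    _ = (q : ℚ) ^ ((k + 1) * 2) * gaussBinom q (2 * k + 1) k / 4 := by ring
    _ ≤ _ := by gcongr

theorem gaussBinom_one_mul_pow_lt {q k : ℕ} (hk : 1 ≤ k) (hkq : k + 2 ≤ q) :
    gaussBinom q (k + 1) 1 * gaussBinom q (k + 2) 1 ^ (k + 1) <
      3 / 4 * gaussBinom q (2 * k + 3) (k + 2) := by
  have hQ : (1 : ℚ) < q := by exact_mod_cast (by omega : 1 < q)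
  have growth := pow_mul_gaussBinom_le_gaussBinom (by omega : 1 < q) (k + 1) 1 (k + 1)
  rw [show k + 1 + 1 + (k + 1) = 2 * k + 3 by ring, show 1 + (k + 1) = k + 2 by ring] at growth
  have hB : 0 < gaussBinom q (k + 2) 1 := by
    rw [gaussBinom_one]
    exact div_pos (sub_pos.2 (one_lt_pow₀ hQ (by omega))) (sub_pos.2 hQ)
  have key := four_mul_pow_le_three_mul_sub_one_pow (Q := (q : ℚ)) hk (by exact_mod_cast hkq)
  have hAB : gaussBinom q (k + 1) 1 * gaussBinom q (k + 2) 1 ^ k <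
      3 / 4 * (q : ℚ) ^ ((k + 1) * (k + 1)) :=
    calc _ < (q : ℚ) ^ (k + 1) / (q - 1) * ((q : ℚ) ^ (k + 2) / (q - 1)) ^ k :=
          mul_lt_mul (gaussBinom_one_lt (by omega) _)
            (pow_le_pow_left₀ hB.le (gaussBinom_one_lt (by omega) _).le k)
            (pow_pos hB k) (by positivity)
      _ = (q : ℚ) ^ ((k + 1) * (k + 1)) * q ^ k / (q - 1) ^ (k + 1) := by
          rw [div_pow, div_mul_div_comm, ← pow_succ', ← pow_mul, ← pow_add, ← pow_add]
          ring
      _ ≤ _ := by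
          rw [div_le_iff₀ (by positivity)]
          nlinarith [mul_le_mul_of_nonneg_left key
            (by positivity : (0 : ℚ) ≤ q ^ ((k + 1) * (k + 1)))]
  calc _ = gaussBinom q (k + 1) 1 * gaussBinom q (k + 2) 1 ^ k * gaussBinom q (k + 2) 1 := by
        ring
    _ < 3 / 4 * (q : ℚ) ^ ((k + 1) * (k + 1)) * gaussBinom q (k + 2) 1 := by gcongr
    _ ≤ _ := by rw [mul_assoc]; gcongr

theorem stmt9 {q m : ℕ} (hqm : m ≤ q) (hm : 3 ≤ m) :
    gaussBinom q (m - 1) 1 * gaussBinom q m 1 ^ (m - 1) +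
        gaussBinom q (m - 1) 1 ^ 2 * gaussBinom q (2 * m - 3) (m - 2) <
      gaussBinom q (2 * m - 1) m := by
  obtain ⟨k, rfl⟩ : ∃ k, m = k + 2 := ⟨m - 2, by omega⟩
  rw [show k + 2 - 1 = k + 1 by omega, show 2 * (k + 2) - 3 = 2 * k + 1 by omega,
    show k + 2 - 2 = k by omega, show 2 * (k + 2) - 1 = 2 * k + 3 by omega]
  have first := gaussBinom_one_mul_pow_lt (by omega) hqm
  have second := gaussBinom_one_sq_mul_le (q := q) (by omega) k
  linarith
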